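/- Orthogonality identity: let ψ solve the Grad–Shafranov problem on D with vortex core Ω = {ψ − r² − γ > 0} and set Ψ = ψ − r² − γ. Then ∫_Ω ∇Ψ · ∇(r² + γ) r⁻¹ dz dr = 0, and consequently ∫_Ω |∇Ψ|² r⁻¹ = ∫_Ω |∇ψ|² r⁻¹ − ∫_Ω |∇(r²+γ)|² r⁻¹. -/

import Mathlib

/-!
Since `∇(r² + γ) = (0, 2r)`, the integrand of the first identity is `2 ∂_r Ψ`, and the second
identity is the first one after expanding `|∇ψ|² = |∇Ψ + ∇(r² + γ)|²`. So everything reduces to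
`∫_Ω ∂_r Ψ = 0`. By Fubini this is a statement about the vertical slices `r ↦ Ψ (z, r)` on
`(0, √(R² - z²))`: both endpoints lie on `∂D`, where `Ψ = -r² - γ ≤ 0`, and `max Ψ 0` is an
antiderivative of `1_{Ψ > 0} ∂_r Ψ` off the countable set of zeros of `Ψ` at which `∂_r Ψ ≠ 0`.
Hence each slice integral is `Ψ⁺(end) - Ψ⁺(start) = 0`.
-/

open Real MeasureTheory

noncomputable section

/-- `∂_z` of a function of `(z,r)`. -/
def pz2 (f : ℝ × ℝ → ℝ) (x : ℝ × ℝ) : ℝ := fderiv ℝ f x (1, 0)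

/-- `∂_r` of a function of `(z,r)`. -/
def pr2 (f : ℝ × ℝ → ℝ) (x : ℝ × ℝ) : ℝ := fderiv ℝ f x (0, 1)

/-- `|∇ψ|²` for a function of `(z,r)`. -/
def gradsq (f : ℝ × ℝ → ℝ) (x : ℝ × ℝ) : ℝ := pz2 f x ^ 2 + pr2 f x ^ 2

/-- The half disk `D = {(z,r) : r > 0, z² + r² < R²}`. -/
def halfDisk (R : ℝ) : Set (ℝ × ℝ) := {x | 0 < x.2 ∧ x.1 ^ 2 + x.2 ^ 2 < R ^ 2}

/-- The Grad–Shafranov operator `L = ∂_z² + ∂_r² - r⁻¹ ∂_r`. -/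
def GSop (Ψ : ℝ × ℝ → ℝ) (x : ℝ × ℝ) : ℝ :=
  pz2 (pz2 Ψ) x + pr2 (pr2 Ψ) x - pr2 Ψ x / x.2

open Set Filter Asymptotics

theorem HasDerivAt.max_zero {f : ℝ → ℝ} {f' t : ℝ} (hf : HasDerivAt f f' t)
    (h : f t ≠ 0 ∨ f' = 0) :
    HasDerivAt (fun s => max (f s) 0) (if 0 < f t then f' else 0) t := by
  rcases lt_trichotomy (f t) 0 with hneg | hzero | hpos
  · rw [if_neg hneg.not_gt]
    refine (hasDerivAt_const t 0).congr_of_eventuallyEq ?_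
    filter_upwards [hf.continuousAt.eventually (gt_mem_nhds hneg)] with s hs
    exact max_eq_right hs.le
  · obtain rfl : f' = 0 := h.resolve_left (not_not.2 hzero)
    rw [if_neg hzero.not_gt]
    rw [hasDerivAt_iff_isLittleO] at hf ⊢
    refine (isBigO_of_le _ fun s => ?_).trans_isLittleO hf
    simpa only [smul_zero, sub_zero, Real.norm_eq_abs] using abs_max_sub_max_le_abs (f s) (f t) 0
  · rw [if_pos hpos]
    refine hf.congr_of_eventuallyEq ?_
    filter_upwards [hf.continuousAt.eventually (lt_mem_nhds hpos)] with s hs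
    exact max_eq_left hs.le

theorem countable_setOf_eq_zero_deriv_ne_zero {f f' : ℝ → ℝ}
    (hf : ∀ t, HasDerivAt f (f' t) t) : {t | f t = 0 ∧ f' t ≠ 0}.Countable := by
  refine (HereditarilyLindelofSpace.isLindelof _).countable_of_isDiscrete
    (isDiscrete_iff_nhdsNE.2 fun t ht => inf_principal_eq_bot.2 ?_)
  filter_upwards [(hf t).eventually_ne ht.2] with s hs hs'
  exact hs (hs'.1.trans ht.1.symm)

theorem integral_indicator_pos_deriv_eq_max_sub {f f' : ℝ → ℝ} {a b : ℝ}
    (hf : ∀ t, HasDerivAt f (f' t) t) (hint : IntervalIntegrable f' volume a b) :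
    ∫ t in a..b, {t | 0 < f t}.indicator f' t = max (f b) 0 - max (f a) 0 := by
  have hcont : Continuous f := continuous_iff_continuousAt.2 fun t => (hf t).continuousAt
  refine integral_eq_of_hasDerivAt_off_countable _ _ (countable_setOf_eq_zero_deriv_ne_zero hf)
    (hcont.max continuous_const).continuousOn (fun t ht => ?_) ?_
  · simpa only [indicator_apply, mem_ofPred_eq] using
      (hf t).max_zero (not_and_or.1 ht.2 |>.imp_right not_not.1)
  · rw [intervalIntegrable_iff] at hint ⊢
    exact hint.indicator (isOpen_lt continuous_const hcont).measurableSet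

theorem isOpen_halfDisk (R : ℝ) : IsOpen (halfDisk R) :=
  (isOpen_lt continuous_const continuous_snd).inter
    (isOpen_lt ((continuous_fst.pow 2).add (continuous_snd.pow 2)) continuous_const)

theorem halfDisk_subset_Icc (R : ℝ) : halfDisk R ⊆ Icc (-|R|, -|R|) (|R|, |R|) := by
  rintro ⟨z, r⟩ ⟨hr, hzr⟩
  have hz : |z| < |R| := sq_lt_sq.1 (by nlinarith)
  have hr' : |r| < |R| := sq_lt_sq.1 (by nlinarith)
  rw [abs_lt] at hz hr'
  exact ⟨⟨hz.1.le, hr'.1.le⟩, hz.2.le, hr'.2.le⟩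

theorem Continuous.integrableOn_of_subset_halfDisk {f : ℝ × ℝ → ℝ} (hf : Continuous f)
    {R : ℝ} {s : Set (ℝ × ℝ)} (hs : s ⊆ halfDisk R) : IntegrableOn f s :=
  (hf.integrableOn_Icc).mono_set (hs.trans (halfDisk_subset_Icc R))

theorem hasDerivAt_pr2 {f : ℝ × ℝ → ℝ} {z r : ℝ} (hf : DifferentiableAt ℝ f (z, r)) :
    HasDerivAt (fun s => f (z, s)) (pr2 f (z, r)) r :=
  hf.hasFDerivAt.comp_hasDerivAt r ((hasDerivAt_const r z).prodMk (hasDerivAt_id r))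

theorem continuous_pr2 {f : ℝ × ℝ → ℝ} (hf : ContDiff ℝ 1 f) : Continuous (pr2 f) :=
  (hf.continuous_fderiv one_ne_zero).clm_apply continuous_const

theorem mk_mem_halfDisk_iff {R z r : ℝ} :
    (z, r) ∈ halfDisk R ↔ r ∈ Ioo 0 √(R ^ 2 - z ^ 2) := by
  refine and_congr_right fun hr => ?_
  rw [lt_sqrt hr.le]
  constructor <;> intro h <;> linarith

theorem mk_mem_frontier_halfDisk {R z r : ℝ} (hz : z ^ 2 < R ^ 2)
    (hr : r ∈ Icc 0 √(R ^ 2 - z ^ 2)) (hnot : (z, r) ∉ halfDisk R) :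
    (z, r) ∈ frontier (halfDisk R) := by
  have hb : 0 < √(R ^ 2 - z ^ 2) := sqrt_pos.2 (by linarith)
  have hsub : {z} ×ˢ Ioo 0 √(R ^ 2 - z ^ 2) ⊆ halfDisk R := by
    rintro ⟨z', r'⟩ ⟨rfl, hr'⟩
    exact mk_mem_halfDisk_iff.2 hr'
  rw [frontier, (isOpen_halfDisk R).interior_eq]
  refine ⟨closure_mono hsub ?_, hnot⟩
  rw [closure_prod_eq, closure_singleton, closure_Ioo hb.ne]
  exact ⟨rfl, hr⟩

theorem setIntegral_pr2_halfDisk_sep_pos_eq_zero {R : ℝ} {Ψ : ℝ × ℝ → ℝ}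
    (hΨ : ContDiff ℝ 1 Ψ) (hbd : ∀ x ∈ frontier (halfDisk R), Ψ x ≤ 0) :
    ∫ x in {x ∈ halfDisk R | 0 < Ψ x}, pr2 Ψ x = 0 := by
  set Ω := {x ∈ halfDisk R | 0 < Ψ x}
  have hΩ : MeasurableSet Ω :=
    ((isOpen_halfDisk R).inter (isOpen_lt continuous_const hΨ.continuous)).measurableSet
  have hslice : ∀ z : ℝ, ∫ r, Ω.indicator (pr2 Ψ) (z, r) = 0 := by
    intro z
    set b := √(R ^ 2 - z ^ 2)
    have hpre : (fun r => (z, r)) ⁻¹' Ω = Ioo 0 b ∩ {r | 0 < Ψ (z, r)} :=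
      ext fun r => and_congr_left' mk_mem_halfDisk_iff
    have hind : (fun r => Ω.indicator (pr2 Ψ) (z, r))
        = (Ioo 0 b).indicator ({r | 0 < Ψ (z, r)}.indicator fun r => pr2 Ψ (z, r)) := by
      ext r
      rw [← indicator_comp_right, hpre, indicator_indicator]
      rfl
    rw [hind, integral_indicator measurableSet_Ioo, ← integral_Ioc_eq_integral_Ioo,
      ← intervalIntegral.integral_of_le (sqrt_nonneg _),
      integral_indicator_pos_deriv_eq_max_sub
        (fun r => hasDerivAt_pr2 (hΨ.differentiable one_ne_zero _))
        (((continuous_pr2 hΨ).comp (Continuous.prodMk_right z)).intervalIntegrable _ _)]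
    rcases lt_or_ge (z ^ 2) (R ^ 2) with hz | hz
    · have h0 : Ψ (z, 0) ≤ 0 := hbd _ <| mk_mem_frontier_halfDisk hz
          (left_mem_Icc.2 (sqrt_nonneg _)) fun h => lt_irrefl _ h.1
      have hb : Ψ (z, b) ≤ 0 := hbd _ <| mk_mem_frontier_halfDisk hz
          (right_mem_Icc.2 (sqrt_nonneg _)) fun h => lt_irrefl _ (mk_mem_halfDisk_iff.1 h).2
      rw [max_eq_right h0, max_eq_right hb, sub_self]
    · rw [sqrt_eq_zero'.2 (by linarith), sub_self]
  have hint : Integrable (Ω.indicator (pr2 Ψ)) ((volume : Measure ℝ).prod volume) := by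
    rw [← Measure.volume_eq_prod, integrable_indicator_iff hΩ]
    exact (continuous_pr2 hΨ).integrableOn_of_subset_halfDisk (sep_subset _ _)
  rw [← integral_indicator hΩ, Measure.volume_eq_prod, integral_prod _ hint]
  simp only [hslice, integral_zero]

section Derivatives

variable {ψ : ℝ × ℝ → ℝ} {x : ℝ × ℝ}

theorem hasFDerivAt_snd_sq (x : ℝ × ℝ) :
    HasFDerivAt (fun y : ℝ × ℝ => y.2 ^ 2) ((2 * x.2) • ContinuousLinearMap.snd ℝ ℝ ℝ) x := by
  simpa [Function.comp_def] using
    (hasDerivAt_pow 2 x.2).comp_hasFDerivAt x (hasFDerivAt_snd (p := x))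

theorem pz2_snd_sq_add_const (c : ℝ) (x : ℝ × ℝ) :
    pz2 (fun y : ℝ × ℝ => y.2 ^ 2 + c) x = 0 := by
  simp [pz2, ((hasFDerivAt_snd_sq x).add_const c).fderiv]

theorem pr2_snd_sq_add_const (c : ℝ) (x : ℝ × ℝ) :
    pr2 (fun y : ℝ × ℝ => y.2 ^ 2 + c) x = 2 * x.2 := by
  simp [pr2, ((hasFDerivAt_snd_sq x).add_const c).fderiv]

theorem hasFDerivAt_sub_snd_sq_sub_const (hψ : DifferentiableAt ℝ ψ x) (c : ℝ) :
    HasFDerivAt (fun y : ℝ × ℝ => ψ y - y.2 ^ 2 - c)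
      (fderiv ℝ ψ x - (2 * x.2) • ContinuousLinearMap.snd ℝ ℝ ℝ) x :=
  (hψ.hasFDerivAt.sub (hasFDerivAt_snd_sq x)).sub_const c

theorem pz2_sub_snd_sq_sub_const (hψ : DifferentiableAt ℝ ψ x) (c : ℝ) :
    pz2 (fun y : ℝ × ℝ => ψ y - y.2 ^ 2 - c) x = pz2 ψ x := by
  simp [pz2, (hasFDerivAt_sub_snd_sq_sub_const hψ c).fderiv]

theorem pr2_sub_snd_sq_sub_const (hψ : DifferentiableAt ℝ ψ x) (c : ℝ) :
    pr2 (fun y : ℝ × ℝ => ψ y - y.2 ^ 2 - c) x = pr2 ψ x - 2 * x.2 := by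
  simp [pr2, (hasFDerivAt_sub_snd_sq_sub_const hψ c).fderiv]

theorem grad_dot_grad_snd_sq_add_const_div (Ψ : ℝ × ℝ → ℝ) (c : ℝ) (hx : x.2 ≠ 0) :
    (pz2 Ψ x * pz2 (fun y : ℝ × ℝ => y.2 ^ 2 + c) x
      + pr2 Ψ x * pr2 (fun y : ℝ × ℝ => y.2 ^ 2 + c) x) / x.2 = 2 * pr2 Ψ x := by
  rw [pz2_snd_sq_add_const, pr2_snd_sq_add_const]
  field_simp
  ring

theorem gradsq_snd_sq_add_const_div (c : ℝ) (hx : x.2 ≠ 0) :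
    gradsq (fun y : ℝ × ℝ => y.2 ^ 2 + c) x / x.2 = 4 * x.2 := by
  rw [gradsq, pz2_snd_sq_add_const, pr2_snd_sq_add_const]
  field_simp
  ring

theorem gradsq_sub_snd_sq_sub_const_div (hψ : DifferentiableAt ℝ ψ x) (c : ℝ) (hx : x.2 ≠ 0) :
    gradsq (fun y : ℝ × ℝ => ψ y - y.2 ^ 2 - c) x / x.2
      = gradsq ψ x / x.2 - 4 * pr2 (fun y : ℝ × ℝ => ψ y - y.2 ^ 2 - c) x - 4 * x.2 := by
  rw [gradsq, gradsq, pz2_sub_snd_sq_sub_const hψ, pr2_sub_snd_sq_sub_const hψ]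
  field_simp
  ring

end Derivatives

theorem stmt19_general (R gam : ℝ) (hgam : 0 < gam) (ψ : ℝ × ℝ → ℝ) (hψ : ContDiff ℝ 2 ψ)
    (hbd : ∀ x ∈ frontier (halfDisk R), ψ x = 0)
    (hfin : IntegrableOn (fun x => gradsq ψ x / x.2) (halfDisk R)) :
    (∫ x in {x ∈ halfDisk R | 0 < ψ x - x.2 ^ 2 - gam},
        (pz2 (fun x : ℝ × ℝ => ψ x - x.2 ^ 2 - gam) x
            * pz2 (fun x : ℝ × ℝ => x.2 ^ 2 + gam) x
          + pr2 (fun x : ℝ × ℝ => ψ x - x.2 ^ 2 - gam) x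
            * pr2 (fun x : ℝ × ℝ => x.2 ^ 2 + gam) x) / x.2) = 0 ∧
    (∫ x in {x ∈ halfDisk R | 0 < ψ x - x.2 ^ 2 - gam},
        gradsq (fun x : ℝ × ℝ => ψ x - x.2 ^ 2 - gam) x / x.2)
      = (∫ x in {x ∈ halfDisk R | 0 < ψ x - x.2 ^ 2 - gam}, gradsq ψ x / x.2)
        - ∫ x in {x ∈ halfDisk R | 0 < ψ x - x.2 ^ 2 - gam},
            gradsq (fun x : ℝ × ℝ => x.2 ^ 2 + gam) x / x.2 := by
  set Ω := {x ∈ halfDisk R | 0 < ψ x - x.2 ^ 2 - gam}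
  set Ψ : ℝ × ℝ → ℝ := fun x => ψ x - x.2 ^ 2 - gam
  have hΨ : ContDiff ℝ 1 Ψ := ((hψ.of_le one_le_two).sub (by fun_prop)).sub contDiff_const
  have hΩD : Ω ⊆ halfDisk R := sep_subset _ _
  have hΩ : MeasurableSet Ω :=
    ((isOpen_halfDisk R).inter (isOpen_lt continuous_const hΨ.continuous)).measurableSet
  have horth : ∫ x in Ω, pr2 Ψ x = 0 := by
    refine setIntegral_pr2_halfDisk_sep_pos_eq_zero hΨ fun x hx => ?_
    simp only [hbd x hx]
    linarith [sq_nonneg x.2]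
  have hψ_energy : IntegrableOn (fun x => gradsq ψ x / x.2) Ω := hfin.mono_set hΩD
  have hpr2 : IntegrableOn (fun x => 4 * pr2 Ψ x) Ω :=
    (continuous_const.mul (continuous_pr2 hΨ)).integrableOn_of_subset_halfDisk hΩD
  have hsnd : IntegrableOn (fun x : ℝ × ℝ => 4 * x.2) Ω :=
    (continuous_const.mul continuous_snd).integrableOn_of_subset_halfDisk hΩD
  have hdiff : IntegrableOn (fun x => gradsq ψ x / x.2 - 4 * pr2 Ψ x) Ω := hψ_energy.sub hpr2
  refine ⟨?_, ?_⟩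
  · rw [setIntegral_congr_fun hΩ fun x hx => grad_dot_grad_snd_sq_add_const_div Ψ gam hx.1.1.ne',
      integral_const_mul, horth, mul_zero]
  · rw [setIntegral_congr_fun hΩ fun x hx =>
        gradsq_sub_snd_sq_sub_const_div (hψ.differentiable two_ne_zero x) gam hx.1.1.ne',
      setIntegral_congr_fun hΩ fun x hx => gradsq_snd_sq_add_const_div gam hx.1.1.ne',
      integral_sub hdiff hsnd, integral_sub hψ_energy hpr2, integral_const_mul,
      horth, mul_zero, sub_zero]

/-- Orthogonality identity: for a solution `ψ` of the Grad–Shafranov problem on `D` with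
vortex core `Ω = {ψ - r² - γ > 0}` and `Ψ = ψ - r² - γ`, one has
`∫_Ω ∇Ψ·∇(r²+γ) r⁻¹ = 0`, hence
`∫_Ω |∇Ψ|² r⁻¹ = ∫_Ω |∇ψ|² r⁻¹ - ∫_Ω |∇(r²+γ)|² r⁻¹`. -/
theorem stmt19 (R q lam gam : ℝ) (hR : 0 < R) (hq : 1 < q) (hlam : 0 < lam)
    (hgam : 0 < gam) (ψ : ℝ × ℝ → ℝ) (hψ : ContDiff ℝ 2 ψ)
    (hpde : ∀ x ∈ halfDisk R,
      -(GSop ψ x) = lam * (max (ψ x - x.2 ^ 2 - gam) 0) ^ (2 * q - 1))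
    (hbd : ∀ x ∈ frontier (halfDisk R), ψ x = 0)
    (hfin : IntegrableOn (fun x => gradsq ψ x / x.2) (halfDisk R)) :
    (∫ x in {x ∈ halfDisk R | 0 < ψ x - x.2 ^ 2 - gam},
        (pz2 (fun x : ℝ × ℝ => ψ x - x.2 ^ 2 - gam) x
            * pz2 (fun x : ℝ × ℝ => x.2 ^ 2 + gam) x
          + pr2 (fun x : ℝ × ℝ => ψ x - x.2 ^ 2 - gam) x
            * pr2 (fun x : ℝ × ℝ => x.2 ^ 2 + gam) x) / x.2) = 0 ∧
    (∫ x in {x ∈ halfDisk R | 0 < ψ x - x.2 ^ 2 - gam},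
        gradsq (fun x : ℝ × ℝ => ψ x - x.2 ^ 2 - gam) x / x.2)
      = (∫ x in {x ∈ halfDisk R | 0 < ψ x - x.2 ^ 2 - gam}, gradsq ψ x / x.2)
        - ∫ x in {x ∈ halfDisk R | 0 < ψ x - x.2 ^ 2 - gam},
            gradsq (fun x : ℝ × ℝ => x.2 ^ 2 + gam) x / x.2 :=
  stmt19_general R gam hgam ψ hψ hbd hfin

end
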